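/- Let a(z) and c(z) be rational functions, let b(z) be a meromorphic function on ℂ having at most finitely many poles, and let w be a meromorphic function on ℂ of finite order satisfying the difference Riccati equation w(z+1) = (a(z)w(z) + b(z))/(w(z) − c(z)). Then there is a finite set F ⊂ ℂ such that at every pole ẑ ∉ F of w, of multiplicity k, one has w(z+1) = a(z) + O((z−ẑ)^k) and w(z−1) = c(z−1) + O((z−ẑ)^k) for all z in a neighborhood of ẑ. -/

import Mathlib

open Filter MeasureTheory Topology

noncomputable section

/-- The Nevanlinna proximity function `m(r, f)` of a function `f : ℂ → ℂ`. -/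
def nevProx (f : ℂ → ℂ) (r : ℝ) : ℝ :=
  (2 * Real.pi)⁻¹ * ∫ θ in (0:ℝ)..(2 * Real.pi),
      Real.log (max 1 ‖f ((r : ℂ) * Complex.exp ((θ : ℂ) * Complex.I))‖)

open Classical in
/-- The multiplicity of the pole of `f` at `z` (`0` if `f` does not have a pole there). -/
def poleOrder (f : ℂ → ℂ) (z : ℂ) : ℕ :=
  if h : MeromorphicAt f z then (-((meromorphicOrderAt f z).untopD 0)).toNat else 0

/-- The unintegrated counting function: the number of poles of `f` of modulus at most `t`,
counted with multiplicity. -/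
def poleCount (f : ℂ → ℂ) (t : ℝ) : ℝ :=
  ∑' z : ℂ, if ‖z‖ ≤ t then (poleOrder f z : ℝ) else 0

/-- The integrated Nevanlinna counting function `N(r, f)`. -/
def nevCount (f : ℂ → ℂ) (r : ℝ) : ℝ :=
  (∫ t in (0:ℝ)..r, (poleCount f t - poleCount f 0) / t) + poleCount f 0 * Real.log r

/-- The Nevanlinna characteristic function `T(r, f) = m(r, f) + N(r, f)`. -/
def nevChar (f : ℂ → ℂ) (r : ℝ) : ℝ := nevProx f r + nevCount f r

/-- The order of growth `ρ(f) = limsup_{r → ∞} log T(r, f) / log r` (as an extended real). -/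
def growthOrder (f : ℂ → ℂ) : EReal :=
  Filter.limsup (fun r : ℝ => ((Real.log (nevChar f r) / Real.log r : ℝ) : EReal))
    Filter.atTop

/-- `f` has finite order of growth. -/
def FiniteOrder (f : ℂ → ℂ) : Prop := growthOrder f < ⊤

/-- A set `E ⊆ ℝ` has finite logarithmic measure: `∫_{E ∩ [1, ∞)} dt/t < ∞`. -/
def FiniteLogMeasure (E : Set ℝ) : Prop :=
  ∫⁻ t in E ∩ Set.Ici 1, ENNReal.ofReal t⁻¹ < ⊤

/-- `u(r) = o(v(r))` as `r → ∞` outside a set of finite logarithmic measure. -/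
def SmallOOut (u v : ℝ → ℝ) : Prop :=
  ∃ E : Set ℝ, FiniteLogMeasure E ∧
    ∀ ε : ℝ, 0 < ε → ∀ᶠ r in Filter.atTop, r ∉ E → |u r| ≤ ε * v r

/-- `a` is a small function with respect to `w`: `T(r, a) = S(r, w)`. -/
def SmallFn (a w : ℂ → ℂ) : Prop := SmallOOut (nevChar a) (nevChar w)

/-- `f` is not identically zero as a meromorphic function (it is nonzero away from any
countable exceptional set). -/
def NotIdZero (f : ℂ → ℂ) : Prop := ¬ ({z : ℂ | f z ≠ 0}.Countable)

/-- `f` is not constant as a meromorphic function. -/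
def NonConstant (f : ℂ → ℂ) : Prop := ¬ ∃ cst : ℂ, {z : ℂ | f z ≠ cst}.Countable

/-- `f` is a rational function: a quotient of two polynomials (up to junk values at the
finitely many poles). -/
def IsRationalFn (f : ℂ → ℂ) : Prop :=
  ∃ p q : Polynomial ℂ, q ≠ 0 ∧ {z : ℂ | f z * q.eval z ≠ p.eval z}.Finite

/-- `f` coincides with a rational function as a meromorphic function (i.e. away from a
countable exceptional set). -/
def IsRationalMero (f : ℂ → ℂ) : Prop :=
  ∃ p q : Polynomial ℂ, q ≠ 0 ∧ {z : ℂ | f z * q.eval z ≠ p.eval z}.Countable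

/-- `f` has a pole at `z₀`. -/
def IsPole (f : ℂ → ℂ) (z₀ : ℂ) : Prop :=
  Filter.Tendsto (fun z => ‖f z‖) (nhdsWithin z₀ {z₀}ᶜ) Filter.atTop

/-- `f` has a pole of multiplicity `k` at `z₀`: its Laurent expansion at `z₀` begins at
order `-k`. -/
def PoleOfOrder (f : ℂ → ℂ) (k : ℕ) (z₀ : ℂ) : Prop :=
  ∃ g : ℂ → ℂ, AnalyticAt ℂ g z₀ ∧ g z₀ ≠ 0 ∧
    ∀ᶠ z in nhdsWithin z₀ {z₀}ᶜ, f z = g z / (z - z₀) ^ k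

/-- `f` has a zero of multiplicity `k` at `z₀`: its Laurent expansion at `z₀` begins at
order `k`. -/
def ZeroOfOrder (f : ℂ → ℂ) (k : ℕ) (z₀ : ℂ) : Prop :=
  ∃ g : ℂ → ℂ, AnalyticAt ℂ g z₀ ∧ g z₀ ≠ 0 ∧
    ∀ᶠ z in nhdsWithin z₀ {z₀}ᶜ, f z = (z - z₀) ^ k * g z

/-- `w` is a meromorphic function on `ℂ` whose representative `ℂ → ℂ` is honest: it is
analytic away from its poles (no junk values). -/
def NormalizedMero (w : ℂ → ℂ) : Prop :=
  MeromorphicOn w Set.univ ∧ ∀ z : ℂ, ¬ IsPole w z → AnalyticAt ℂ w z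

/-- The data of a difference polynomial in `w(z), w(z + c 0), …, w(z + c (n-1))`:
the shifts `c`, a finite set `I` of multi-indexes, and the coefficient functions `a`. -/
structure DiffPoly (n : ℕ) where
  c : Fin n → ℂ
  I : Finset (Fin (n + 1) → ℕ)
  a : (Fin (n + 1) → ℕ) → ℂ → ℂ

namespace DiffPoly

variable {n : ℕ}

/-- The shifts, including the trivial shift `0` as the `0`-th one. -/
def shift (P : DiffPoly n) : Fin (n + 1) → ℂ := Fin.cases 0 P.c

/-- The value `P(z, w) = ∑_{λ ∈ I} a_λ(z) w(z)^{λ 0} w(z + c 0)^{λ 1} ⋯ w(z + c (n-1))^{λ n}`. -/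
def eval (P : DiffPoly n) (w : ℂ → ℂ) (z : ℂ) : ℂ :=
  ∑ lam ∈ P.I, P.a lam z * ∏ j : Fin (n + 1), w (z + P.shift j) ^ lam j

/-- The total degree `deg_w(P) = max_{λ ∈ I} (λ_0 + ⋯ + λ_n)`. -/
def deg (P : DiffPoly n) : ℕ := P.I.sup fun lam => ∑ j, lam j

/-- `ord_0(P) = min_{λ ∈ I} λ_0`, the order of the zero of `P(z, x_0, …, x_n)` at `x_0 = 0`. -/
def ord0 (P : DiffPoly n) : ℕ := sInf {m : ℕ | ∃ lam ∈ P.I, lam 0 = m}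

/-- The weight `κ(P) = max_{λ ∈ I} (λ_1 + ⋯ + λ_n)`. -/
def weight (P : DiffPoly n) : ℕ := P.I.sup fun lam => ∑ j : Fin n, lam j.succ

/-- `P` is homogeneous: each term has the same nonzero total degree. -/
def Homogeneous (P : DiffPoly n) : Prop :=
  0 < P.deg ∧ ∀ lam ∈ P.I, (∑ j, lam j) = P.deg

end DiffPoly

/-- The value at `x` of the polynomial in one variable whose coefficients are the functions
`h 0, …, h d` evaluated at `z`. -/
def polyEval (h : ℕ → ℂ → ℂ) (d : ℕ) (z x : ℂ) : ℂ :=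
  ∑ k ∈ Finset.range (d + 1), h k z * x ^ k

/-- `H` and `Q`, as polynomials in one variable over the field of meromorphic functions,
have no common factors: away from a countable set of points `z` the complex polynomials
`H(z, ·)` and `Q(z, ·)` have no common root. -/
def NoCommonFactors (h : ℕ → ℂ → ℂ) (dH : ℕ) (q : ℕ → ℂ → ℂ) (dQ : ℕ) : Prop :=
  {z : ℂ | ∃ x : ℂ, polyEval h dH z x = 0 ∧ polyEval q dQ z x = 0}.Countable

end

/-! Off the finitely many points where `a`, `b` or `c` is not analytic, and their translates
by `1`, the equation holds identically in punctured neighbourhoods of `ẑ` and of `ẑ - 1`: a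
meromorphic function vanishing off a countable set vanishes near every point. There it factors
as `(w(z+1) - a(z)) (w(z) - c(z)) = b(z) + a(z) c(z)` and, one step back,
`(w(z-1) - c(z-1)) (w(z) - a(z-1)) = b(z-1) + a(z-1) c(z-1)`. Since `w - u` has a pole of
order `k` at `ẑ` for every `u` continuous there, the first factors are `O((z - ẑ)^k)`. -/

open Filter Topology Asymptotics

lemma IsRationalFn.finite_setOf_not_analyticAt {f : ℂ → ℂ} (hf : IsRationalFn f) :
    {z | ¬ AnalyticAt ℂ f z}.Finite := by
  obtain ⟨p, q, hq, hfin⟩ := hf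
  have hE := hfin.union (q.finite_setOfPred_isRoot hq)
  refine hE.subset fun x hx => by_contra fun hxE => hx ?_
  have hqx : q.eval x ≠ 0 := fun h => hxE (Or.inr h)
  have hpq : (fun z => p.eval z / q.eval z) =ᶠ[𝓝 x] f := by
    filter_upwards [hE.isClosed.isOpen_compl.mem_nhds hxE] with z hz
    simp only [Set.mem_compl_iff, Set.mem_union, Set.mem_ofPred_eq, not_or, not_not] at hz
    exact (div_eq_iff hz.2).mpr hz.1.symm
  exact ((p.differentiable.analyticAt x).div (q.differentiable.analyticAt x) hqx).congr hpq

section CountableExceptions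

variable {𝕜 : Type*} [NontriviallyNormedField 𝕜] [CompleteSpace 𝕜]

lemma Set.Countable.notMem_nhdsNE {s : Set 𝕜} (hs : s.Countable) (x : 𝕜) : s ∉ 𝓝[≠] x := by
  intro hsx
  have hdense : Dense (insert x s)ᶜ := (hs.insert x).dense_compl 𝕜
  have hx : x ∈ interior (insert x s) :=
    mem_interior_iff_mem_nhds.mpr (insert_mem_nhds_iff.mpr hsx)
  rw [interior_eq_empty_iff_dense_compl.mpr hdense] at hx
  exact hx

lemma MeromorphicAt.eventuallyEq_nhdsNE_of_countable {E : Type*} [NormedAddCommGroup E]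
    [NormedSpace 𝕜 E] {f g : 𝕜 → E} {x : 𝕜}
    (hf : MeromorphicAt f x) (hg : MeromorphicAt g x) (hfg : {z | f z ≠ g z}.Countable) :
    f =ᶠ[𝓝[≠] x] g := by
  rcases (hf.sub hg).eventually_eq_zero_or_eventually_ne_zero with h | h
  · exact h.mono fun z hz => sub_eq_zero.mp hz
  · exact absurd (h.mono fun z hz => sub_ne_zero.mp hz) (hfg.notMem_nhdsNE x)

end CountableExceptions

lemma PoleOfOrder.isBigO_of_mul_sub_eq {w f u v : ℂ → ℂ} {k : ℕ} {z₀ : ℂ}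
    (hw : PoleOfOrder w k z₀) (hk : 0 < k) (hu : ContinuousAt u z₀) (hv : ContinuousAt v z₀)
    (h : ∀ᶠ z in 𝓝[≠] z₀, f z * (w z - u z) = v z) :
    f =O[𝓝[≠] z₀] fun z => (z - z₀) ^ k := by
  obtain ⟨g, hg, hg₀, hwg⟩ := hw
  -- `(z - z₀) ^ k * (w z - u z) = g z - u z * (z - z₀) ^ k` tends to `g z₀ ≠ 0`
  set q : ℂ → ℂ := fun z => g z - u z * (z - z₀) ^ k
  have hq : ContinuousAt q z₀ := by fun_prop
  have hq₀ : q z₀ ≠ 0 := by simpa [q, zero_pow hk.ne'] using hg₀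
  have hbdd : (fun z => v z / q z) =O[𝓝[≠] z₀] fun _ => (1 : ℂ) :=
    ((hv.div hq hq₀).tendsto.isBigO_one ℂ).mono nhdsWithin_le_nhds
  have hfq : (fun z => v z / q z * (z - z₀) ^ k) =ᶠ[𝓝[≠] z₀] f := by
    filter_upwards [h, hwg, (hq.eventually_ne hq₀).filter_mono nhdsWithin_le_nhds,
      self_mem_nhdsWithin] with z hz hwz hqz hzz₀
    have hpow : (z - z₀) ^ k ≠ 0 := pow_ne_zero k (sub_ne_zero.mpr hzz₀)
    rw [← hz, hwz]
    field_simp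
    ring
  simpa only [one_mul] using (hbdd.mul (isBigO_refl (fun z => (z - z₀) ^ k) _)).congr' hfq .rfl

lemma riccati_eventually_nhdsNE {a b c w : ℂ → ℂ} (hw : MeromorphicOn w Set.univ)
    (heq : {z : ℂ | w (z + 1) * (w z - c z) ≠ a z * w z + b z}.Countable) {x : ℂ}
    (ha : AnalyticAt ℂ a x) (hb : AnalyticAt ℂ b x) (hc : AnalyticAt ℂ c x) :
    ∀ᶠ z in 𝓝[≠] x, w (z + 1) * (w z - c z) = a z * w z + b z := by
  have hw₀ : MeromorphicAt w x := hw x trivial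
  have hw₁ : MeromorphicAt (fun z => w (z + 1)) x :=
    (hw (x + 1) trivial).comp_analyticAt (g := (· + 1)) (by fun_prop)
  exact MeromorphicAt.eventuallyEq_nhdsNE_of_countable
    (hw₁.mul (hw₀.sub hc.meromorphicAt)) ((ha.meromorphicAt.mul hw₀).add hb.meromorphicAt) heq

theorem riccati_pole_expansion_general (a c : ℂ → ℂ)
    (ha : IsRationalFn a) (hc : IsRationalFn c)
    (b : ℂ → ℂ)
    (hbPoles : {z : ℂ | ¬ AnalyticAt ℂ b z}.Finite)
    (w : ℂ → ℂ) (hw : NormalizedMero w)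
    (heq : {z : ℂ | w (z + 1) * (w z - c z) ≠ a z * w z + b z}.Countable) :
    ∃ F : Set ℂ, F.Finite ∧ ∀ zh : ℂ, zh ∉ F → ∀ k : ℕ, 0 < k → PoleOfOrder w k zh →
      ∃ U ∈ nhds zh, ∃ M : ℝ, ∀ z ∈ U, z ≠ zh →
        ‖w (z + 1) - a z‖ ≤ M * ‖z - zh‖ ^ k ∧
        ‖w (z - 1) - c (z - 1)‖ ≤ M * ‖z - zh‖ ^ k := by
  set S := {z | ¬ AnalyticAt ℂ a z} ∪ {z | ¬ AnalyticAt ℂ c z} ∪ {z | ¬ AnalyticAt ℂ b z}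
  have hS : S.Finite := (ha.finite_setOf_not_analyticAt.union
    hc.finite_setOf_not_analyticAt).union hbPoles
  refine ⟨S ∪ (· + 1) '' S, hS.union (hS.image _), fun zh hzh k hk hpole => ?_⟩
  have hreg : ∀ x ∉ S, AnalyticAt ℂ a x ∧ AnalyticAt ℂ b x ∧ AnalyticAt ℂ c x := by
    intro x hx
    simp only [S, Set.mem_union, Set.mem_ofPred_eq, not_or, not_not] at hx
    exact ⟨hx.1.1, hx.2, hx.1.2⟩
  obtain ⟨ha₀, hb₀, hc₀⟩ := hreg zh fun h => hzh (.inl h)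
  obtain ⟨ha₁, hb₁, hc₁⟩ := hreg (zh - 1) fun h => hzh (.inr ⟨zh - 1, h, sub_add_cancel zh 1⟩)
  have heq₀ := riccati_eventually_nhdsNE hw.1 heq ha₀ hb₀ hc₀
  have heq₁ : ∀ᶠ z in 𝓝[≠] zh,
      w z * (w (z - 1) - c (z - 1)) = a (z - 1) * w (z - 1) + b (z - 1) := by
    have hshift : Tendsto (· - 1) (𝓝[≠] zh) (𝓝[≠] (zh - 1)) := map_subRight_nhdsNE.le
    simpa only [sub_add_cancel] using
      hshift.eventually (riccati_eventually_nhdsNE hw.1 heq ha₁ hb₁ hc₁)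
  have hO₀ : (fun z => w (z + 1) - a z) =O[𝓝[≠] zh] fun z => (z - zh) ^ k :=
    hpole.isBigO_of_mul_sub_eq hk (v := fun z => b z + a z * c z) hc₀.continuousAt
      (by fun_prop)
      (heq₀.mono fun z hz => by linear_combination hz)
  have hO₁ : (fun z => w (z - 1) - c (z - 1)) =O[𝓝[≠] zh] fun z => (z - zh) ^ k :=
    hpole.isBigO_of_mul_sub_eq hk (u := fun z => a (z - 1))
      (v := fun z => b (z - 1) + a (z - 1) * c (z - 1)) (by fun_prop) (by fun_prop)
      (heq₁.mono fun z hz => by linear_combination hz)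
  obtain ⟨M, hM⟩ := (hO₀.prod_left hO₁).bound
  obtain ⟨U, hU, hUM⟩ := (eventually_nhdsWithin_iff.mp hM).exists_mem
  refine ⟨U, hU, M, fun z hz hzzh => ?_⟩
  have hMz := hUM z hz hzzh
  rw [norm_pow] at hMz
  exact ⟨(norm_fst_le _).trans hMz, (norm_snd_le _).trans hMz⟩

/-- second half of the proof of Theorem 2.1: at all but finitely many
poles `ẑ` (of multiplicity `k`) of a finite-order meromorphic solution of the difference
Riccati equation `w(z+1) = (a w + b)/(w - c)`, one has `w(z+1) = a(z) + O((z-ẑ)^k)` and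
`w(z-1) = c(z-1) + O((z-ẑ)^k)` near `ẑ`. -/
theorem riccati_pole_expansion (a c : ℂ → ℂ)
    (ha : IsRationalFn a) (hc : IsRationalFn c)
    (b : ℂ → ℂ) (hbMero : MeromorphicOn b Set.univ)
    (hbPoles : {z : ℂ | ¬ AnalyticAt ℂ b z}.Finite)
    (w : ℂ → ℂ) (hw : NormalizedMero w) (hword : FiniteOrder w)
    (heq : {z : ℂ | w (z + 1) * (w z - c z) ≠ a z * w z + b z}.Countable) :
    ∃ F : Set ℂ, F.Finite ∧ ∀ zh : ℂ, zh ∉ F → ∀ k : ℕ, 0 < k → PoleOfOrder w k zh →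
      ∃ U ∈ nhds zh, ∃ M : ℝ, ∀ z ∈ U, z ≠ zh →
        ‖w (z + 1) - a z‖ ≤ M * ‖z - zh‖ ^ k ∧
        ‖w (z - 1) - c (z - 1)‖ ≤ M * ‖z - zh‖ ^ k :=
  riccati_pole_expansion_general a c ha hc b hbPoles w hw heq
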